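/- Let (φ,ψ) : A ⋈^θ I → ℂ be a nonzero multiplicative linear functional (with φ ∈ A* and ψ ∈ I* its components under the identification (A ⋈^θ I)* ≅ A* × I*), and suppose the closed linear span of θ(A)I ∪ Iθ(A) equals I. Then either ψ = 0 and φ is a character of A, or ψ is a character of I and φ(a) = ψ(θ(a)i₀) for any i₀ ∈ I with ψ(i₀) = 1. -/
import Mathlib


noncomputable def amul {A B : Type*} [NonUnitalNormedRing A] [NormedSpace ℂ A]
    [NonUnitalNormedRing B] [NormedSpace ℂ B]
    (θ : A →L[ℂ] B) {I : Submodule ℂ B}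
    (hIl : ∀ b i : B, i ∈ I → b * i ∈ I) (hIr : ∀ b i : B, i ∈ I → i * b ∈ I)
    (x y : A × I) : A × I :=
  (x.1 * y.1,
    ⟨θ x.1 * (y.2 : B) + (x.2 : B) * θ y.1 + (x.2 : B) * (y.2 : B),
      I.add_mem (I.add_mem (hIl _ _ y.2.2) (hIr _ _ x.2.2)) (hIr _ _ x.2.2)⟩)

/-- Classification of the characters of `A ⋈^θ I`: if `χ = (φ, ψ)` is a nonzero continuous
multiplicative linear functional on `A ⋈^θ I` and the closed linear span of
`θ(A)I ∪ Iθ(A)` is `I`, then either `ψ = 0` and `φ` is a character of `A`, or `ψ` is a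
character of `I` and `φ(a) = ψ(θ(a)i₀)` for any `i₀ ∈ I` with `ψ(i₀) = 1`. -/
theorem amalgamation_char_classification {A B : Type*} [NonUnitalNormedRing A]
    [NormedSpace ℂ A] [IsScalarTower ℂ A A] [SMulCommClass ℂ A A] [CompleteSpace A]
    [NonUnitalNormedRing B] [NormedSpace ℂ B]
    [IsScalarTower ℂ B B] [SMulCommClass ℂ B B] [CompleteSpace B]
    (θ : A →L[ℂ] B) (hθ : ∀ x y : A, θ (x * y) = θ x * θ y)
    (I : Submodule ℂ B) (hIc : IsClosed (I : Set B))
    (hIl : ∀ b i : B, i ∈ I → b * i ∈ I) (hIr : ∀ b i : B, i ∈ I → i * b ∈ I)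
    (hspan : closure ((Submodule.span ℂ
        {b : B | (∃ a : A, ∃ i ∈ I, b = θ a * i) ∨ (∃ a : A, ∃ i ∈ I, b = i * θ a)} :
        Submodule ℂ B) : Set B) = (I : Set B))
    (χ : A × I → ℂ) (hlin : IsLinearMap ℂ χ) (hcont : Continuous χ)
    (hmul : ∀ x y : A × I, χ (amul θ hIl hIr x y) = χ x * χ y) (hne : χ ≠ 0) :
    ((∀ i : I, χ (0, i) = 0) ∧ (fun a : A => χ (a, 0)) ≠ 0 ∧
      (∀ a a' : A, χ (a * a', 0) = χ (a, 0) * χ (a', 0))) ∨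
    ((fun i : I => χ (0, i)) ≠ 0 ∧
      (∀ i j : I, χ (0, ⟨(i : B) * (j : B), hIr _ _ i.2⟩) = χ (0, i) * χ (0, j)) ∧
      (∀ i₀ : I, χ (0, i₀) = 1 →
        ∀ a : A, χ (a, 0) = χ (0, ⟨θ a * (i₀ : B), hIl _ _ i₀.2⟩))) := by
  by_cases hψ : (fun i : I => χ (0, i)) = 0
  · left
    refine ⟨fun i => congrFun hψ i, ?_, ?_⟩
    · intro hφ
      apply hne
      funext x
      have hx : (x.1, x.2) = ((x.1, (0:I)) : A × I) + (((0:A), x.2) : A × I) := by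
        simp [Prod.ext_iff]
      calc χ x = χ (x.1, 0) + χ (0, x.2) := by rw [← hlin.map_add, ← hx]
        _ = 0 := by rw [congrFun hφ x.1, congrFun hψ x.2]; simp
    · intro a a'
      have h := hmul (a, 0) (a', 0)
      have h2 : amul θ hIl hIr ((a, (0:I))) ((a', (0:I))) = (a * a', 0) := by
        refine Prod.ext rfl (Subtype.ext ?_)
        simp [amul]
      rwa [h2] at h
  · right
    refine ⟨hψ, ?_, ?_⟩
    · intro i j
      have h := hmul (0, i) (0, j)
      have h2 : amul θ hIl hIr (((0:A), i)) (((0:A), j)) =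
          ((0 : A), ⟨(i : B) * (j : B), hIr _ _ i.2⟩) := by
        refine Prod.ext (by simp [amul]) (Subtype.ext ?_)
        simp [amul]
      rwa [h2] at h
    · intro i₀ hi₀ a
      have h := hmul (a, 0) (0, i₀)
      have h2 : amul θ hIl hIr ((a, (0:I))) (((0:A), i₀)) =
          ((0 : A), ⟨θ a * (i₀ : B), hIl _ _ i₀.2⟩) := by
        refine Prod.ext (by simp [amul]) (Subtype.ext ?_)
        simp [amul]
      rw [h2, hi₀, mul_one] at h
      exact h.symm
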